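/- Let B : ℝ/ℤ → SL(2,ℂ) be a continuous cocycle over the irrational rotation by α, uniformly hyperbolic with unit unstable and stable vectors u(x), s(x). Then twice the Lyapunov exponent satisfies 2L ≤ C′ ∫_{ℝ/ℤ} d(u(x), s(x)) dx, where C′ depends only on sup_x ‖B(x)‖ and the lower bound for ‖B(x)·s(x)‖, using the inequality ‖B·u‖/‖B·s‖ ≤ 1 + d(u,s)·‖B‖/‖B·s‖. -/

import Mathlib

open Matrix Complex Filter

noncomputable section

/-- Operator norm of a 2×2 complex matrix acting on ℂ². -/
def opN (A : Matrix (Fin 2) (Fin 2) ℂ) : ℝ :=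
  ‖Matrix.toEuclideanCLM (𝕜 := ℂ) (n := Fin 2) A‖

/-- Determinant of the 2×2 matrix with columns u, v. -/
def crossDet (u v : Fin 2 → ℂ) : ℂ := u 0 * v 1 - u 1 * v 0

/-- Euclidean norm of a vector in ℂ². -/
def vnorm (u : Fin 2 → ℂ) : ℝ := Real.sqrt (‖u 0‖ ^ 2 + ‖u 1‖ ^ 2)

/-- Sine-of-angle distance between the directions of two nonzero vectors. -/
def dSin (u v : Fin 2 → ℂ) : ℝ := ‖crossDet u v‖ / (vnorm u * vnorm v)

/-- Two vectors span the same direction (are parallel). -/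
def SameDir (u v : Fin 2 → ℂ) : Prop := crossDet u v = 0

def vI : Fin 2 → ℂ := ![Complex.I, 1]
def vmI : Fin 2 → ℂ := ![-Complex.I, 1]

abbrev SL2C := Matrix.SpecialLinearGroup (Fin 2) ℂ

/-- The set K_{x,y} of B ∈ SL(2,ℂ) sending direction x to i and y to -i. -/
def Kset (x y : Fin 2 → ℂ) : Set SL2C :=
  {B | SameDir ((B : Matrix (Fin 2) (Fin 2) ℂ).mulVec x) vI ∧
       SameDir ((B : Matrix (Fin 2) (Fin 2) ℂ).mulVec y) vmI}

/-- k(x,y) = inf over K_{x,y} of ‖B‖². -/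
def kfun (x y : Fin 2 → ℂ) : ℝ :=
  sInf ((fun B : SL2C => opN (B : Matrix (Fin 2) (Fin 2) ℂ) ^ 2) '' Kset x y)

/-- B is minimizing: ‖B⁻¹·(i,1)‖ = ‖B⁻¹·(-i,1)‖. -/
def Minimizing (B : SL2C) : Prop :=
  vnorm ((((B⁻¹ : SL2C) : Matrix (Fin 2) (Fin 2) ℂ)).mulVec vI) =
  vnorm (((B⁻¹ : SL2C) : Matrix (Fin 2) (Fin 2) ℂ).mulVec vmI)

/-- Rotation matrix R_λ, for complex λ. -/
def Rmat (l : ℂ) : Matrix (Fin 2) (Fin 2) ℂ :=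
  !![Complex.cos (2 * Real.pi * l), -Complex.sin (2 * Real.pi * l);
     Complex.sin (2 * Real.pi * l), Complex.cos (2 * Real.pi * l)]

/-- Diagonal matrix D_μ = diag(μ, μ⁻¹). -/
def Dmat (m : ℂ) : Matrix (Fin 2) (Fin 2) ℂ := !![m, 0; 0, m⁻¹]

/-- Möbius action of a 2×2 complex matrix on ℂ. -/
def moebius (A : Matrix (Fin 2) (Fin 2) ℂ) (z : ℂ) : ℂ :=
  (A 0 0 * z + A 0 1) / (A 1 0 * z + A 1 1)

/-- Cocycle product B_n(x) = B(x+(n-1)α) ⋯ B(x). -/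
def coc (α : ℝ) (B : ℝ → Matrix (Fin 2) (Fin 2) ℂ) : ℕ → ℝ → Matrix (Fin 2) (Fin 2) ℂ
  | 0, _ => 1
  | n + 1, x => B (x + n * α) * coc α B n x

/-- Uniform hyperbolicity of the cocycle (α, B), witnessed by continuous
invariant unstable/stable direction fields U, S with exponential expansion/contraction. -/
def UnifHyp (α : ℝ) (B : ℝ → Matrix (Fin 2) (Fin 2) ℂ) (U S : ℝ → Fin 2 → ℂ) : Prop :=
  Continuous U ∧ Continuous S ∧ (∀ x, U x ≠ 0) ∧ (∀ x, S x ≠ 0) ∧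
  (∀ x, SameDir (U (x + 1)) (U x)) ∧ (∀ x, SameDir (S (x + 1)) (S x)) ∧
  (∀ x, SameDir ((B x).mulVec (U x)) (U (x + α))) ∧
  (∀ x, SameDir ((B x).mulVec (S x)) (S (x + α))) ∧
  ∃ C > 0, ∃ lam > 1, ∀ n : ℕ, ∀ x : ℝ,
    vnorm ((coc α B n x).mulVec (U x)) ≥ C⁻¹ * lam ^ n * vnorm (U x) ∧
    vnorm ((coc α B n x).mulVec (S x)) ≤ C * lam⁻¹ ^ n * vnorm (S x)

/-- The Lyapunov exponent of the cocycle (α, B) is L. -/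
def IsLE (α : ℝ) (B : ℝ → Matrix (Fin 2) (Fin 2) ℂ) (L : ℝ) : Prop :=
  Tendsto (fun n : ℕ => (n : ℝ)⁻¹ * ∫ x in (0:ℝ)..1, Real.log (opN (coc α B n x)))
    atTop (nhds L)

/-- Complexification of a real matrix. -/
def cplx (A : Matrix (Fin 2) (Fin 2) ℝ) : Matrix (Fin 2) (Fin 2) ℂ :=
  A.map (Complex.ofReal)

/-- The denominators q_n of the continued fraction approximants. -/
def qden (α : ℝ) (n : ℕ) : ℝ := (GenContFract.of α).dens n

/-- β(α) = limsup (ln q_{n+1})/q_n. -/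
def betaCF (α : ℝ) : ℝ :=
  Filter.limsup (fun n : ℕ => Real.log (qden α (n + 1)) / qden α n) atTop

end

noncomputable section MyAux
lemma vnorm_eq (u : Fin 2 → ℂ) : vnorm u = ‖(WithLp.equiv 2 (Fin 2 → ℂ)).symm u‖ := by
  rw [EuclideanSpace.norm_eq]
  simp [vnorm, Fin.sum_univ_two]

lemma vnorm_mulVec_le (A : Matrix (Fin 2) (Fin 2) ℂ) (u : Fin 2 → ℂ) :
    vnorm (A.mulVec u) ≤ opN A * vnorm u := by
  rw [vnorm_eq, vnorm_eq, opN]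
  calc ‖(WithLp.equiv 2 (Fin 2 → ℂ)).symm (A.mulVec u)‖
      = ‖Matrix.toEuclideanCLM (𝕜 := ℂ) (n := Fin 2) A ((WithLp.equiv 2 (Fin 2 → ℂ)).symm u)‖ := by
        rfl
    _ ≤ _ := (Matrix.toEuclideanCLM (𝕜 := ℂ) (n := Fin 2) A).le_opNorm _

lemma vnorm_nonneg (u : Fin 2 → ℂ) : 0 ≤ vnorm u := Real.sqrt_nonneg _

lemma vnorm_pos_of_ne (u : Fin 2 → ℂ) (hu : u ≠ 0) : 0 < vnorm u := by
  rw [vnorm_eq, norm_pos_iff]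
  intro h
  exact hu (by simpa using congrArg (WithLp.equiv 2 (Fin 2 → ℂ)) h)

lemma vnorm_add_le (u v : Fin 2 → ℂ) : vnorm (u + v) ≤ vnorm u + vnorm v := by
  simp only [vnorm_eq]
  exact norm_add_le ((WithLp.equiv 2 (Fin 2 → ℂ)).symm u) ((WithLp.equiv 2 (Fin 2 → ℂ)).symm v)

lemma vnorm_smul (c : ℂ) (u : Fin 2 → ℂ) : vnorm (c • u) = ‖c‖ * vnorm u := by
  simp only [vnorm_eq]
  exact norm_smul c ((WithLp.equiv 2 (Fin 2 → ℂ)).symm u)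

lemma lagrange (u s : Fin 2 → ℂ) :
    (vnorm u)^2 * (vnorm s)^2 =
      ‖(starRingEnd ℂ) (s 0) * u 0 + (starRingEnd ℂ) (s 1) * u 1‖^2 + ‖crossDet u s‖^2 := by
  have h1 : (vnorm u)^2 = ‖u 0‖^2 + ‖u 1‖^2 := by
    rw [vnorm, Real.sq_sqrt (by positivity)]
  have h2 : (vnorm s)^2 = ‖s 0‖^2 + ‖s 1‖^2 := by
    rw [vnorm, Real.sq_sqrt (by positivity)]
  rw [h1, h2]
  simp only [crossDet, ← Complex.normSq_eq_norm_sq, Complex.sq_norm, Complex.normSq_apply,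
    Complex.add_re, Complex.add_im, Complex.mul_re, Complex.mul_im, Complex.sub_re,
    Complex.sub_im, Complex.conj_re, Complex.conj_im]
  ring

lemma key_ineq (A : Matrix (Fin 2) (Fin 2) ℂ) (u s : Fin 2 → ℂ)
    (hu : vnorm u = 1) (hs : vnorm s = 1) :
    vnorm (A.mulVec u) ≤ vnorm (A.mulVec s) + opN A * ‖crossDet u s‖ := by
  set c : ℂ := (starRingEnd ℂ) (s 0) * u 0 + (starRingEnd ℂ) (s 1) * u 1 with hc
  set v : Fin 2 → ℂ := u - c • s with hv
  have hopN : 0 ≤ opN A := norm_nonneg _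
  have hcross : crossDet v s = crossDet u s := by
    simp only [crossDet, hv, Pi.sub_apply, Pi.smul_apply, smul_eq_mul]
    ring
  have hss : (starRingEnd ℂ) (s 0) * s 0 + (starRingEnd ℂ) (s 1) * s 1 = 1 := by
    have h2 : ‖s 0‖^2 + ‖s 1‖^2 = 1 := by
      have := hs
      rw [vnorm] at this
      nlinarith [Real.sq_sqrt (show (0:ℝ) ≤ ‖s 0‖^2 + ‖s 1‖^2 by positivity),
        Real.sqrt_nonneg (‖s 0‖^2 + ‖s 1‖^2)]
    have e0 : (starRingEnd ℂ) (s 0) * s 0 = ((‖s 0‖^2 : ℝ) : ℂ) := by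
      rw [mul_comm, Complex.mul_conj]
      simp [Complex.normSq_eq_norm_sq]
    have e1 : (starRingEnd ℂ) (s 1) * s 1 = ((‖s 1‖^2 : ℝ) : ℂ) := by
      rw [mul_comm, Complex.mul_conj]
      simp [Complex.normSq_eq_norm_sq]
    rw [e0, e1, ← Complex.ofReal_add, h2, Complex.ofReal_one]
  have hsv : (starRingEnd ℂ) (s 0) * v 0 + (starRingEnd ℂ) (s 1) * v 1 = 0 := by
    simp only [hv, Pi.sub_apply, Pi.smul_apply, smul_eq_mul]
    have : (starRingEnd ℂ) (s 0) * (u 0 - c * s 0) + (starRingEnd ℂ) (s 1) * (u 1 - c * s 1)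
        = c - c * ((starRingEnd ℂ) (s 0) * s 0 + (starRingEnd ℂ) (s 1) * s 1) := by
      rw [hc]; ring
    rw [this, hss, mul_one, sub_self]
  have hvnorm : vnorm v = ‖crossDet u s‖ := by
    have hl := lagrange v s
    rw [hsv, hcross, hs] at hl
    simp only [norm_zero, one_pow, mul_one, zero_pow, ne_eq, OfNat.ofNat_ne_zero,
      not_false_eq_true, zero_add] at hl
    nlinarith [vnorm_nonneg v, norm_nonneg (crossDet u s)]
  have hcle : ‖c‖ ≤ 1 := by
    have hl := lagrange u s
    rw [hu, hs, ← hc] at hl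
    nlinarith [norm_nonneg c, norm_nonneg (crossDet u s)]
  have hdecomp : u = c • s + v := by rw [hv]; abel
  calc vnorm (A.mulVec u) = vnorm (c • A.mulVec s + A.mulVec v) := by
        rw [hdecomp, Matrix.mulVec_add, Matrix.mulVec_smul]
    _ ≤ vnorm (c • A.mulVec s) + vnorm (A.mulVec v) := vnorm_add_le _ _
    _ = ‖c‖ * vnorm (A.mulVec s) + vnorm (A.mulVec v) := by rw [vnorm_smul]
    _ ≤ 1 * vnorm (A.mulVec s) + opN A * vnorm v := by
        gcongr
        · exact vnorm_nonneg _
        · exact vnorm_mulVec_le _ _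
    _ = vnorm (A.mulVec s) + opN A * ‖crossDet u s‖ := by rw [one_mul, hvnorm]
end MyAux

/-- 2L ≤ C′ ∫ d(u(x), s(x)) dx. -/
theorem stmt12 (M m : ℝ) (hm : 0 < m) :
    ∃ C' > 0, ∀ (α : ℝ) (B : ℝ → Matrix (Fin 2) (Fin 2) ℂ) (U S : ℝ → Fin 2 → ℂ) (L : ℝ),
      Irrational α → Continuous B → (∀ x, (B x).det = 1) → (∀ x, B (x + 1) = B x) →
      UnifHyp α B U S →
      (∀ x, vnorm (U x) = 1) → (∀ x, vnorm (S x) = 1) →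
      (∀ x, opN (B x) ≤ M) →
      (∀ x, m ≤ vnorm ((B x).mulVec (S x))) →
      (L = (1 / 2) * ∫ x in (0:ℝ)..1,
        Real.log (vnorm ((B x).mulVec (U x)) / vnorm ((B x).mulVec (S x)))) →
      2 * L ≤ C' * ∫ x in (0:ℝ)..1, dSin (U x) (S x) := by
  classical
  refine ⟨max M 1 / m, by positivity, ?_⟩
  intro α B U S L _hirr hB hdet _hper hUH hU1 hS1 hM hmS hL
  obtain ⟨hUc, hSc, hUne, hSne, -, -, -, -, -⟩ := hUH
  -- positivity facts
  have hBu_pos : ∀ x, 0 < vnorm ((B x).mulVec (U x)) := by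
    intro x
    apply vnorm_pos_of_ne
    intro h
    have hunit : IsUnit (B x) := (Matrix.isUnit_iff_isUnit_det _).mpr (by rw [hdet x]; exact isUnit_one)
    have hinj := Matrix.mulVec_injective_iff_isUnit.mpr hunit
    exact hUne x (hinj (by simp [h]))
  have hBs_pos : ∀ x, 0 < vnorm ((B x).mulVec (S x)) := fun x => lt_of_lt_of_le hm (hmS x)
  -- continuity helpers
  have hcv : ∀ (F : ℝ → Fin 2 → ℂ), Continuous F → Continuous fun x => vnorm (F x) := by
    intro F hF
    exact Real.continuous_sqrt.comp
      ((((continuous_apply (0 : Fin 2)).comp hF).norm.pow 2).add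
        (((continuous_apply (1 : Fin 2)).comp hF).norm.pow 2))
  have hcmv : ∀ (F : ℝ → Fin 2 → ℂ), Continuous F → Continuous fun x => (B x).mulVec (F x) := by
    intro F hF
    apply continuous_pi
    intro i
    have heq : (fun x => (B x).mulVec (F x) i) =
        fun x => B x i 0 * F x 0 + B x i 1 * F x 1 := by
      funext x
      simp [Matrix.mulVec, dotProduct, Fin.sum_univ_two]
    rw [heq]
    have hBij : ∀ j : Fin 2, Continuous fun x => B x i j := fun j =>
      (continuous_apply j).comp ((continuous_apply i).comp hB)
    have hFj : ∀ j : Fin 2, Continuous fun x => F x j := fun j =>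
      (continuous_apply j).comp hF
    exact ((hBij 0).mul (hFj 0)).add ((hBij 1).mul (hFj 1))
  have hnum : Continuous fun x => vnorm ((B x).mulVec (U x)) := hcv _ (hcmv _ hUc)
  have hden : Continuous fun x => vnorm ((B x).mulVec (S x)) := hcv _ (hcmv _ hSc)
  have hf_cont : Continuous fun x =>
      Real.log (vnorm ((B x).mulVec (U x)) / vnorm ((B x).mulVec (S x))) := by
    apply Continuous.log (hnum.div hden fun x => (hBs_pos x).ne')
    intro x
    exact (div_pos (hBu_pos x) (hBs_pos x)).ne'
  have hg_eq : (fun x => dSin (U x) (S x)) = fun x => ‖crossDet (U x) (S x)‖ := by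
    funext x
    simp [dSin, hU1 x, hS1 x]
  have hg_cont : Continuous fun x => dSin (U x) (S x) := by
    rw [hg_eq]
    have h0 : ∀ j : Fin 2, Continuous fun x => U x j := fun j => (continuous_apply j).comp hUc
    have h1 : ∀ j : Fin 2, Continuous fun x => S x j := fun j => (continuous_apply j).comp hSc
    exact (((h0 0).mul (h1 1)).sub ((h0 1).mul (h1 0))).norm
  -- pointwise bound
  have hpt : ∀ x, Real.log (vnorm ((B x).mulVec (U x)) / vnorm ((B x).mulVec (S x)))
      ≤ (max M 1 / m) * dSin (U x) (S x) := by
    intro x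
    set a := vnorm ((B x).mulVec (U x)) with ha
    set b := vnorm ((B x).mulVec (S x)) with hb
    have hap : 0 < a := hBu_pos x
    have hbp : 0 < b := hBs_pos x
    have hd : dSin (U x) (S x) = ‖crossDet (U x) (S x)‖ := by
      simp [dSin, hU1 x, hS1 x]
    have hdnn : (0:ℝ) ≤ ‖crossDet (U x) (S x)‖ := norm_nonneg _
    have hkey : a ≤ b + opN (B x) * ‖crossDet (U x) (S x)‖ :=
      key_ineq (B x) (U x) (S x) (hU1 x) (hS1 x)
    have hopM : opN (B x) ≤ max M 1 := le_trans (hM x) (le_max_left M 1)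
    have h1 : Real.log (a / b) ≤ a / b - 1 :=
      Real.log_le_sub_one_of_pos (div_pos hap hbp)
    have h2 : a / b - 1 = (a - b) / b := by field_simp
    have h3 : a - b ≤ (max M 1) * ‖crossDet (U x) (S x)‖ := by
      have : opN (B x) * ‖crossDet (U x) (S x)‖ ≤ (max M 1) * ‖crossDet (U x) (S x)‖ := by
        gcongr
      linarith
    have h4 : (a - b) / b ≤ (max M 1) * ‖crossDet (U x) (S x)‖ / m := by
      rw [div_le_div_iff₀ hbp hm]
      have hmb : m ≤ b := hmS x
      have hKnn : (0:ℝ) ≤ (max M 1) * ‖crossDet (U x) (S x)‖ := by positivity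
      nlinarith
    calc Real.log (a / b) ≤ (a - b) / b := by rw [← h2]; exact h1
      _ ≤ (max M 1) * ‖crossDet (U x) (S x)‖ / m := h4
      _ = (max M 1 / m) * dSin (U x) (S x) := by rw [hd]; ring
  -- integrate
  rw [hL]
  have h2L : 2 * ((1:ℝ) / 2 * ∫ x in (0:ℝ)..1,
      Real.log (vnorm ((B x).mulVec (U x)) / vnorm ((B x).mulVec (S x)))) =
      ∫ x in (0:ℝ)..1,
      Real.log (vnorm ((B x).mulVec (U x)) / vnorm ((B x).mulVec (S x))) := by ring
  rw [h2L]
  have hfint : IntervalIntegrable (fun x =>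
      Real.log (vnorm ((B x).mulVec (U x)) / vnorm ((B x).mulVec (S x)))) MeasureTheory.volume 0 1 :=
    hf_cont.intervalIntegrable 0 1
  have hgint : IntervalIntegrable (fun x => (max M 1 / m) * dSin (U x) (S x))
      MeasureTheory.volume 0 1 :=
    (continuous_const.mul hg_cont).intervalIntegrable 0 1
  calc (∫ x in (0:ℝ)..1, Real.log (vnorm ((B x).mulVec (U x)) / vnorm ((B x).mulVec (S x))))
      ≤ ∫ x in (0:ℝ)..1, (max M 1 / m) * dSin (U x) (S x) :=
        intervalIntegral.integral_mono_on (by norm_num) hfint hgint (fun x _ => hpt x)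
    _ = (max M 1 / m) * ∫ x in (0:ℝ)..1, dSin (U x) (S x) := by
        rw [intervalIntegral.integral_const_mul]
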